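/- arXiv:2508.05939 — 2 statements merged into one kernel-verified Lean document; each statement's English description precedes it below -/
import Mathlib

section
/- Fix α ∈ (0,1), finite sets X and Θ, fully supported priors φ, μ, and u : X × Θ → ℝ. For any joint probability P on X × Θ with P|_θ = μ and P|_ξ ≪ φ, one has U(P) ≤ f(P|_ξ), where U(P) = Σ_{ξ,θ} P(ξ,θ)[u(ξ,θ) − α log(P(ξ)/φ(ξ)) − log(P(ξ|θ)/P(ξ))] and f(ν) = Σ_θ μ(θ) log(Σ_ξ φ(ξ) e^{u(ξ,θ)} (ν(ξ)/φ(ξ))^{1−α}). -/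
open Finset Real

variable {X Θ : Type*} [Fintype X] [Fintype Θ]

/-- X-marginal of a joint distribution. -/
noncomputable def margX (P : X → Θ → ℝ) (ξ : X) : ℝ := ∑ θ, P ξ θ

/-- Conditional choice probability `P(ξ|θ) = P(ξ,θ)/μ(θ)`. -/
noncomputable def ccp (P : X → Θ → ℝ) (μ : Θ → ℝ) (ξ : X) (θ : Θ) : ℝ := P ξ θ / μ θ

/-- The state-characteristic rational inattention objective. -/
noncomputable def Uobj (α : ℝ) (u : X → Θ → ℝ) (φ : X → ℝ) (μ : Θ → ℝ)
    (P : X → Θ → ℝ) : ℝ :=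
  (∑ ξ, ∑ θ, P ξ θ * u ξ θ)
    - α * ∑ ξ, margX P ξ * Real.log (margX P ξ / φ ξ)
    - ∑ ξ, ∑ θ, P ξ θ * Real.log (ccp P μ ξ θ / margX P ξ)

/-- The integrand `Y(ξ,θ;P)`. -/
noncomputable def Yfun (α : ℝ) (u : X → Θ → ℝ) (φ : X → ℝ) (μ : Θ → ℝ)
    (P : X → Θ → ℝ) (ξ : X) (θ : Θ) : ℝ :=
  u ξ θ - α * Real.log (margX P ξ / φ ξ) - Real.log (ccp P μ ξ θ / margX P ξ)


/-- The Jensen envelope `f(ν) = Σ_θ μ(θ) log( Σ_ξ φ(ξ) e^{u(ξ,θ)} (ν(ξ)/φ(ξ))^{1−α} )`. -/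
noncomputable def fJen (α : ℝ) (u : X → Θ → ℝ) (φ : X → ℝ) (μ : Θ → ℝ)
    (ν : X → ℝ) : ℝ :=
  ∑ θ, μ θ * Real.log (∑ ξ, φ ξ * Real.exp (u ξ θ) * (ν ξ / φ ξ) ^ (1 - α))

theorem jensen_upper_bound
    (α : ℝ) (hα : 0 < α) (hα1 : α < 1)
    (u : X → Θ → ℝ)
    (φ : X → ℝ) (hφ0 : ∀ ξ, 0 < φ ξ) (hφ1 : ∑ ξ, φ ξ = 1)
    (μ : Θ → ℝ) (hμ0 : ∀ θ, 0 < μ θ) (hμ1 : ∑ θ, μ θ = 1)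
    (P : X → Θ → ℝ)
    (hP0 : ∀ ξ θ, 0 ≤ P ξ θ) (hPθ : ∀ θ, ∑ ξ, P ξ θ = μ θ) :
    Uobj α u φ μ P ≤ fJen α u φ μ (margX P) := by
  have hUobj : Uobj α u φ μ P = ∑ θ, ∑ ξ, P ξ θ * Yfun α u φ μ P ξ θ := by
    rw [Finset.sum_comm]
    have key : ∀ ξ, ∑ θ, P ξ θ * Yfun α u φ μ P ξ θ
        = (∑ θ, P ξ θ * u ξ θ)
          - α * (margX P ξ * Real.log (margX P ξ / φ ξ))
          - ∑ θ, P ξ θ * Real.log (ccp P μ ξ θ / margX P ξ) := by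
      intro ξ
      simp only [Yfun, mul_sub]
      rw [Finset.sum_sub_distrib, Finset.sum_sub_distrib]
      congr 1
      congr 1
      rw [← Finset.sum_mul, margX]
      ring
    rw [Uobj]
    simp only [key]
    rw [Finset.sum_sub_distrib, Finset.sum_sub_distrib, Finset.mul_sum]
  rw [hUobj, fJen]
  apply Finset.sum_le_sum
  intro θ _
  set w : X → ℝ := fun ξ => P ξ θ / μ θ with hw
  have hw0 : ∀ ξ, 0 ≤ w ξ := fun ξ => div_nonneg (hP0 ξ θ) (hμ0 θ).le
  have hw1 : ∑ ξ, w ξ = 1 := by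
    rw [hw, ← Finset.sum_div, hPθ, div_self (hμ0 θ).ne']
  have hPw : ∀ ξ, P ξ θ = μ θ * w ξ := by
    intro ξ; rw [hw]; simp only []; rw [mul_comm, div_mul_cancel₀ _ (hμ0 θ).ne']
  -- Jensen's inequality for log
  have hjen : ∑ ξ, w ξ * Yfun α u φ μ P ξ θ
      ≤ Real.log (∑ ξ, w ξ * Real.exp (Yfun α u φ μ P ξ θ)) := by
    have := strictConcaveOn_log_Ioi.concaveOn.le_map_sum (t := Finset.univ)
      (w := w) (p := fun ξ => Real.exp (Yfun α u φ μ P ξ θ))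
      (fun ξ _ => hw0 ξ) hw1 (fun ξ _ => Real.exp_pos _)
    simpa [Real.log_exp, smul_eq_mul] using this
  -- pointwise bound
  have hpt : ∀ ξ, w ξ * Real.exp (Yfun α u φ μ P ξ θ)
      ≤ φ ξ * Real.exp (u ξ θ) * (margX P ξ / φ ξ) ^ (1 - α) := by
    intro ξ
    rcases eq_or_lt_of_le (hP0 ξ θ) with h0 | hpos
    · have hwz : w ξ = 0 := by rw [hw]; simp [← h0]
      rw [hwz, zero_mul]
      have hmn : 0 ≤ margX P ξ := Finset.sum_nonneg (fun θ' _ => hP0 ξ θ')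
      exact mul_nonneg (mul_nonneg (hφ0 ξ).le (Real.exp_pos _).le)
        (Real.rpow_nonneg (div_nonneg hmn (hφ0 ξ).le) _)
    · have hm : 0 < margX P ξ :=
        lt_of_lt_of_le hpos (Finset.single_le_sum (fun θ' _ => hP0 ξ θ') (Finset.mem_univ θ))
      have hmφ : 0 < margX P ξ / φ ξ := div_pos hm (hφ0 ξ)
      have hccp : 0 < ccp P μ ξ θ / margX P ξ :=
        div_pos (div_pos hpos (hμ0 θ)) hm
      apply le_of_eq
      have e1 : Real.exp (Yfun α u φ μ P ξ θ)
          = Real.exp (u ξ θ) / (margX P ξ / φ ξ) ^ α / (ccp P μ ξ θ / margX P ξ) := by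
        rw [Yfun, Real.exp_sub, Real.exp_sub, Real.exp_log hccp]
        congr 2
        rw [Real.rpow_def_of_pos hmφ, mul_comm]
      have e2 : (margX P ξ / φ ξ) ^ (1 - α)
          = (margX P ξ / φ ξ) / (margX P ξ / φ ξ) ^ α := by
        rw [eq_div_iff (Real.rpow_pos_of_pos hmφ α).ne', ← Real.rpow_add hmφ,
          sub_add_cancel, Real.rpow_one]
      rw [e1, e2, hw]
      have hra : 0 < (margX P ξ / φ ξ) ^ α := Real.rpow_pos_of_pos hmφ α
      rw [ccp]
      field_simp [hpos.ne', (hμ0 θ).ne', (hφ0 ξ).ne']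
  -- positivity of the inner sum
  have hex : ∃ ξ, w ξ ≠ 0 := by
    by_contra h
    push_neg at h
    simp [h] at hw1
  obtain ⟨ξ0, hξ0⟩ := hex
  have hsumpos : 0 < ∑ ξ, w ξ * Real.exp (Yfun α u φ μ P ξ θ) := by
    apply Finset.sum_pos' (fun ξ _ => mul_nonneg (hw0 ξ) (Real.exp_pos _).le)
    exact ⟨ξ0, Finset.mem_univ _,
      mul_pos (lt_of_le_of_ne (hw0 ξ0) (Ne.symm hξ0)) (Real.exp_pos _)⟩
  have hlog : Real.log (∑ ξ, w ξ * Real.exp (Yfun α u φ μ P ξ θ))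
      ≤ Real.log (∑ ξ, φ ξ * Real.exp (u ξ θ) * (margX P ξ / φ ξ) ^ (1 - α)) :=
    Real.log_le_log hsumpos (Finset.sum_le_sum (fun ξ _ => hpt ξ))
  calc ∑ ξ, P ξ θ * Yfun α u φ μ P ξ θ
      = μ θ * ∑ ξ, w ξ * Yfun α u φ μ P ξ θ := by
        rw [Finset.mul_sum]
        exact Finset.sum_congr rfl (fun ξ _ => by rw [hPw ξ]; ring)
    _ ≤ μ θ * Real.log (∑ ξ, φ ξ * Real.exp (u ξ θ) * (margX P ξ / φ ξ) ^ (1 - α)) :=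
        mul_le_mul_of_nonneg_left (hjen.trans hlog) (hμ0 θ).le
end

section
/- Fix α ∈ (0,1), finite sets X and Θ, fully supported priors φ, μ, and u : X × Θ → ℝ. If P maximizes U over joints with P|_θ = μ and P|_ξ ≪ φ (so that P satisfies the weighted multinomial logit formula P(ξ|θ) = φ(ξ)^α P(ξ)^{1−α} e^{u(ξ,θ)}/Z(θ) with full-support marginal), then the Jensen upper bound is attained: f(P|_ξ) = U(P). -/
open Finset Real

variable {X Θ : Type*} [Fintype X] [Fintype Θ]

theorem jensen_bound_attained
    (α : ℝ) (hα : 0 < α) (hα1 : α < 1)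
    (u : X → Θ → ℝ)
    (φ : X → ℝ) (hφ0 : ∀ ξ, 0 < φ ξ) (hφ1 : ∑ ξ, φ ξ = 1)
    (μ : Θ → ℝ) (hμ0 : ∀ θ, 0 < μ θ) (hμ1 : ∑ θ, μ θ = 1)
    (P : X → Θ → ℝ)
    (hP0 : ∀ ξ θ, 0 ≤ P ξ θ) (hPθ : ∀ θ, ∑ ξ, P ξ θ = μ θ)
    (hmax : ∀ Q : X → Θ → ℝ, (∀ ξ θ, 0 ≤ Q ξ θ) → (∀ θ, ∑ ξ, Q ξ θ = μ θ) →
      Uobj α u φ μ Q ≤ Uobj α u φ μ P)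
    (hfull : ∀ ξ, 0 < margX P ξ)
    (hMNL : ∀ ξ θ, ccp P μ ξ θ =
      φ ξ ^ α * margX P ξ ^ (1 - α) * Real.exp (u ξ θ)
        / (∑ ξ', φ ξ' ^ α * margX P ξ' ^ (1 - α) * Real.exp (u ξ' θ))) :
    fJen α u φ μ (margX P) = Uobj α u φ μ P := by

  set Z : Θ → ℝ := fun θ => ∑ ξ', φ ξ' ^ α * margX P ξ' ^ (1 - α) * Real.exp (u ξ' θ)
    with hZ
  have hXne : (Finset.univ : Finset X).Nonempty := by
    by_contra h
    rw [Finset.not_nonempty_iff_eq_empty] at h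
    rw [h, Finset.sum_empty] at hφ1
    norm_num at hφ1
  have hZpos : ∀ θ, 0 < Z θ := by
    intro θ
    apply Finset.sum_pos
    · intro ξ _
      have h1 := hφ0 ξ
      have h2 := hfull ξ
      positivity
    · exact hXne
  have hZne : ∀ θ, Z θ ≠ 0 := fun θ => (hZpos θ).ne'
  -- fJen equals Σ_θ μ θ * log (Z θ)
  have hterm : ∀ ξ θ, φ ξ * Real.exp (u ξ θ) * (margX P ξ / φ ξ) ^ (1 - α)
      = φ ξ ^ α * margX P ξ ^ (1 - α) * Real.exp (u ξ θ) := by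
    intro ξ θ
    have hm := hfull ξ
    have hp := hφ0 ξ
    have hpne : φ ξ ^ (1 - α) ≠ 0 := by positivity
    rw [Real.div_rpow hm.le hp.le]
    have hmul : φ ξ ^ α * φ ξ ^ (1 - α) = φ ξ := by
      rw [← Real.rpow_add hp]; norm_num
    field_simp
    linear_combination -hmul
  have hfJen : fJen α u φ μ (margX P) = ∑ θ, μ θ * Real.log (Z θ) := by
    unfold fJen
    refine Finset.sum_congr rfl fun θ _ => ?_
    rw [Finset.sum_congr rfl fun ξ _ => hterm ξ θ]
  -- pointwise: log identity
  have hlog : ∀ ξ θ, Real.log (ccp P μ ξ θ / margX P ξ)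
      = α * Real.log (φ ξ) - α * Real.log (margX P ξ) + u ξ θ - Real.log (Z θ) := by
    intro ξ θ
    have hm := hfull ξ
    have hp := hφ0 ξ
    have hmne : margX P ξ ≠ 0 := hm.ne'
    rw [hMNL ξ θ]
    have h1 : φ ξ ^ α * margX P ξ ^ (1 - α) * Real.exp (u ξ θ) / Z θ / margX P ξ
        = φ ξ ^ α * margX P ξ ^ (-α : ℝ) * Real.exp (u ξ θ) / Z θ := by
      have hsplit : margX P ξ ^ (1 - α) = margX P ξ * margX P ξ ^ (-α : ℝ) := by
        rw [show (1 - α : ℝ) = 1 + (-α) by ring, Real.rpow_add hm, Real.rpow_one]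
      rw [hsplit]
      have hcan : margX P ξ * (margX P ξ)⁻¹ = 1 := mul_inv_cancel₀ hmne
      field_simp
    have e1 : (0:ℝ) < φ ξ ^ α * margX P ξ ^ (-α : ℝ) := by positivity
    have e2 : (0:ℝ) < φ ξ ^ α := by positivity
    have e3 : (0:ℝ) < margX P ξ ^ (-α : ℝ) := by positivity
    rw [h1, Real.log_div (by positivity) (hZne θ),
      Real.log_mul (e1.ne') (Real.exp_pos _).ne',
      Real.log_mul e2.ne' e3.ne',
      Real.log_rpow hp, Real.log_rpow hm, Real.log_exp]
    ring
  -- rewrite Uobj as a double sum of P * log Z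
  have hU : Uobj α u φ μ P = ∑ θ, μ θ * Real.log (Z θ) := by
    unfold Uobj
    have hmid : α * ∑ ξ, margX P ξ * Real.log (margX P ξ / φ ξ)
        = ∑ ξ, ∑ θ, α * (P ξ θ * Real.log (margX P ξ / φ ξ)) := by
      rw [Finset.mul_sum]
      refine Finset.sum_congr rfl fun ξ _ => ?_
      rw [margX, Finset.sum_mul, Finset.mul_sum]
    rw [hmid, ← Finset.sum_sub_distrib, ← Finset.sum_sub_distrib]
    have key : ∀ ξ, ((∑ θ, P ξ θ * u ξ θ) - ∑ θ, α * (P ξ θ * Real.log (margX P ξ / φ ξ)))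
        - ∑ θ, P ξ θ * Real.log (ccp P μ ξ θ / margX P ξ)
        = ∑ θ, P ξ θ * Real.log (Z θ) := by
      intro ξ
      rw [← Finset.sum_sub_distrib, ← Finset.sum_sub_distrib]
      refine Finset.sum_congr rfl fun θ _ => ?_
      rw [hlog ξ θ, Real.log_div (hfull ξ).ne' (hφ0 ξ).ne']
      ring
    rw [Finset.sum_congr rfl fun ξ _ => key ξ, Finset.sum_comm]
    refine Finset.sum_congr rfl fun θ _ => ?_
    rw [← Finset.sum_mul, hPθ θ]
  rw [hfJen, hU]
end
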